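/- arXiv:1210.3863 — 2 statements merged into one kernel-verified Lean document; each statement's English description precedes it below -/
import Mathlib

section
/- Let K be a number field, ℓ a prime dividing m_K, and b_ℓ := ord_ℓ(m_K). Then for every integer k ≥ 0, φ_K(ℓ^{b_ℓ+k}) = ℓ^k · φ_K(ℓ^{b_ℓ}). -/
open IntermediateField NumberField Filter Asymptotics
open scoped Classical

/-- `φ_K(q) := [K(ζ_q) : K]`, the degree of the `q`-th cyclotomic extension of `K`,
realized inside an algebraic closure of `K`. -/
noncomputable def phiK (K : Type) [Field K] [NumberField K] (q : ℕ) : ℕ :=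
  Module.finrank K ↥(IntermediateField.adjoin K {x : AlgebraicClosure K | x ^ q = 1})

/-- The image of `K` in its algebraic closure, as an intermediate field of `ℚ`. -/
noncomputable def KF (K : Type) [Field K] [NumberField K] :
    IntermediateField ℚ (AlgebraicClosure K) :=
  IntermediateField.restrictScalars ℚ (⊥ : IntermediateField K (AlgebraicClosure K))

/-- `ℚ(ζ_m)` inside the algebraic closure of `K`. -/
noncomputable def Qz (K : Type) [Field K] [NumberField K] (m : ℕ) :
    IntermediateField ℚ (AlgebraicClosure K) :=
  IntermediateField.adjoin ℚ {x : AlgebraicClosure K | x ^ m = 1}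

/-- `ℚ^cyc`, the compositum of all cyclotomic fields, inside the algebraic closure of `K`. -/
noncomputable def Qcyc (K : Type) [Field K] [NumberField K] :
    IntermediateField ℚ (AlgebraicClosure K) :=
  IntermediateField.adjoin ℚ {x : AlgebraicClosure K | ∃ n : ℕ, 0 < n ∧ x ^ n = 1}

/-- `m_K`: the smallest positive integer `m` such that the maximal abelian subfield
`K ∩ ℚ^cyc` of `K` is contained in `ℚ(ζ_m)`. -/
noncomputable def mK (K : Type) [Field K] [NumberField K] : ℕ :=
  sInf {m : ℕ | 0 < m ∧ KF K ⊓ Qcyc K ≤ Qz K m}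

/-!
For `n > 0` the field `K ∩ ℚ(ζ_n)` has degree `φ(n) / φ_K(n)`, because `ℚ(ζ_n)/ℚ` is Galois,
so `[K(ζ_n) : K] = [ℚ(ζ_n) : K ∩ ℚ(ζ_n)]`. Since `K ∩ ℚ^cyc ⊆ ℚ(ζ_{m_K})` and
`ℚ(ζ_a) ∩ ℚ(ζ_b) = ℚ(ζ_{gcd(a, b)})`, the field `K ∩ ℚ(ζ_{ℓ^{b_ℓ + k}})` lies in
`ℚ(ζ_{gcd(m_K, ℓ^{b_ℓ + k})}) = ℚ(ζ_{ℓ^{b_ℓ}})`, so it does not depend on `k`. As `b_ℓ ≥ 1`,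
`φ(ℓ^{b_ℓ + k}) = ℓ^k φ(ℓ^{b_ℓ})`, and the claim follows.
-/

open Module

namespace Nat

theorem totient_lcm_mul_totient_gcd (a b : ℕ) :
    (a.lcm b).totient * (a.gcd b).totient = a.totient * b.totient := by
  rcases Nat.eq_zero_or_pos (a.gcd b) with hg | hg
  · obtain ⟨rfl, rfl⟩ := Nat.gcd_eq_zero_iff.1 hg
    simp
  have hgl : (a.gcd b).gcd (a.lcm b) = a.gcd b :=
    Nat.gcd_eq_left ((Nat.gcd_dvd_left a b).trans (Nat.dvd_lcm_left a b))
  have h₁ := totient_gcd_mul_totient_mul (a.gcd b) (a.lcm b)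
  rw [hgl, Nat.gcd_mul_lcm, totient_gcd_mul_totient_mul a b] at h₁
  refine Nat.eq_of_mul_eq_mul_right hg ?_
  linarith

theorem totient_prime_pow_add {p : ℕ} (hp : p.Prime) {b : ℕ} (hb : 0 < b) (k : ℕ) :
    (p ^ (b + k)).totient = p ^ k * (p ^ b).totient := by
  rw [totient_prime_pow hp hb, totient_prime_pow hp (by omega),
    show b + k - 1 = b - 1 + k by omega, pow_add]
  ring

theorem gcd_pow_factorization_add {p : ℕ} (hp : p.Prime) {m : ℕ} (hm : m ≠ 0) (k : ℕ) :
    m.gcd (p ^ (m.factorization p + k)) = p ^ m.factorization p := by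
  have hcop : (m / p ^ m.factorization p).Coprime (p ^ k) :=
    ((hp.coprime_iff_not_dvd.2 (not_dvd_ordCompl hp hm)).symm).pow_right k
  nth_rw 1 [← ordProj_mul_ordCompl_eq_self m p]
  rw [pow_add, Nat.gcd_mul_left, hcop.gcd_eq_one, mul_one]

end Nat

namespace IntermediateField

variable {F L : Type*} [Field F] [Field L] [Algebra F L]

/-- Over `E ⊓ M` the fields `M` and `E` are linearly disjoint, since `M` is Galois and they
meet in the base. -/
theorem finrank_sup_mul_finrank_inf_of_isGalois (E M : IntermediateField F L)
    [FiniteDimensional F E] [FiniteDimensional F M] [IsGalois F M] :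
    finrank F ↥(E ⊔ M) * finrank F ↥(E ⊓ M) = finrank F E * finrank F M := by
  set N := E ⊓ M
  have hE : N ≤ E := inf_le_left
  have hM : N ≤ M := inf_le_right
  have : IsGalois F (extendScalars hM) := ‹IsGalois F M›
  have : IsGalois N (extendScalars hM) := IsGalois.tower_top_of_isGalois F N (extendScalars hM)
  have : FiniteDimensional F (extendScalars hM) := ‹FiniteDimensional F M›
  have : FiniteDimensional F (extendScalars hE) := ‹FiniteDimensional F E›
  have : FiniteDimensional N (extendScalars hM) := Module.Finite.of_restrictScalars_finite F N _
  have : FiniteDimensional N (extendScalars hE) := Module.Finite.of_restrictScalars_finite F N _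
  have hdisj : (extendScalars hM).LinearDisjoint (extendScalars hE) :=
    LinearDisjoint.of_inf_eq_bot (by rw [extendScalars_inf, ← extendScalars_self]; simp [N, inf_comm])
  have key := hdisj.finrank_sup
  rw [extendScalars_sup, ← relfinrank_eq_finrank_of_le, ← relfinrank_eq_finrank_of_le,
    ← relfinrank_eq_finrank_of_le] at key
  rw [← finrank_bot_mul_relfinrank hE, ← finrank_bot_mul_relfinrank hM, sup_comm,
    ← finrank_bot_mul_relfinrank (le_sup_of_le_left hM : N ≤ M ⊔ E), key]
  ring

end IntermediateField

section Cyclotomic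

variable (K : Type) [Field K] [NumberField K]

instance : Algebra.IsAlgebraic ℚ (AlgebraicClosure K) :=
  Algebra.IsAlgebraic.trans ℚ K _

theorem Qz_mono {m n : ℕ} (h : m ∣ n) : Qz K m ≤ Qz K n := by
  refine adjoin.mono _ _ _ fun x (hx : x ^ m = 1) => ?_
  obtain ⟨c, rfl⟩ := h
  rw [Set.mem_ofPred_eq, pow_mul, hx, one_pow]

theorem Qz_le_Qcyc {n : ℕ} (hn : 0 < n) : Qz K n ≤ Qcyc K :=
  adjoin.mono _ _ _ fun _ hx => ⟨n, hn, hx⟩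

theorem Qz_eq_adjoin_simple {n : ℕ} [NeZero n] {ζ : AlgebraicClosure K}
    (hζ : IsPrimitiveRoot ζ n) : Qz K n = ℚ⟮ζ⟯ := by
  apply le_antisymm
  · refine adjoin_le_iff.2 fun x (hx : x ^ n = 1) => ?_
    obtain ⟨i, -, rfl⟩ := hζ.eq_pow_of_pow_eq_one hx
    exact pow_mem (mem_adjoin_simple_self ℚ ζ) i
  · exact adjoin_simple_le_iff.2 (subset_adjoin ℚ _ hζ.pow_eq_one)

/-- Stated for the `ℚ`-algebra structure `algebra'` used by lemmas about arbitrary intermediate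
fields; the default one here, `DivisionRing.toRatAlgebra`, is not reducibly equal to it. -/
instance isGalois_Qz (n : ℕ) [NeZero n] : @IsGalois ℚ _ (Qz K n) _ (Qz K n).algebra' := by
  obtain ⟨ζ, hζ⟩ := HasEnoughRootsOfUnity.exists_primitiveRoot (AlgebraicClosure K) n
  have := hζ.intermediateField_adjoin_isCyclotomicExtension ℚ
  rw [Qz_eq_adjoin_simple K hζ]
  exact IsCyclotomicExtension.isGalois {n} ℚ _

theorem finrank_Qz (n : ℕ) [NeZero n] : finrank ℚ (Qz K n) = n.totient := by
  obtain ⟨ζ, hζ⟩ := HasEnoughRootsOfUnity.exists_primitiveRoot (AlgebraicClosure K) n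
  rw [Qz_eq_adjoin_simple K hζ, adjoin.finrank (Algebra.IsIntegral.isIntegral ζ),
    ← Polynomial.cyclotomic_eq_minpoly_rat hζ (NeZero.pos n), Polynomial.natDegree_cyclotomic]

instance finiteDimensional_Qz (n : ℕ) [NeZero n] : FiniteDimensional ℚ (Qz K n) :=
  Module.finite_of_finrank_pos (by rw [finrank_Qz]; exact Nat.totient_pos.2 (NeZero.pos n))

theorem Qz_sup_Qz (m n : ℕ) [NeZero m] [NeZero n] : Qz K m ⊔ Qz K n = Qz K (m.lcm n) := by
  have : NeZero (m.lcm n) := ⟨Nat.lcm_ne_zero (NeZero.ne m) (NeZero.ne n)⟩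
  obtain ⟨ζ, hζ⟩ := HasEnoughRootsOfUnity.exists_primitiveRoot (AlgebraicClosure K) m
  obtain ⟨η, hη⟩ := HasEnoughRootsOfUnity.exists_primitiveRoot (AlgebraicClosure K) n
  refine le_antisymm
    (sup_le (Qz_mono K (Nat.dvd_lcm_left m n)) (Qz_mono K (Nat.dvd_lcm_right m n))) ?_
  rw [Qz_eq_adjoin_simple K (hζ.pow_mul_pow_lcm hη (NeZero.ne m) (NeZero.ne n)),
    adjoin_simple_le_iff]
  exact mul_mem (pow_mem (le_sup_left (a := Qz K m) (subset_adjoin ℚ _ hζ.pow_eq_one)) _)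
    (pow_mem (le_sup_right (b := Qz K n) (subset_adjoin ℚ _ hη.pow_eq_one)) _)

theorem Qz_inf_Qz (m n : ℕ) [NeZero m] [NeZero n] : Qz K m ⊓ Qz K n = Qz K (m.gcd n) := by
  have : NeZero (m.gcd n) := ⟨Nat.gcd_ne_zero_left (NeZero.ne m)⟩
  have : NeZero (m.lcm n) := ⟨Nat.lcm_ne_zero (NeZero.ne m) (NeZero.ne n)⟩
  have hle : Qz K (m.gcd n) ≤ Qz K m ⊓ Qz K n :=
    le_inf (Qz_mono K (Nat.gcd_dvd_left m n)) (Qz_mono K (Nat.gcd_dvd_right m n))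
  have key := finrank_sup_mul_finrank_inf_of_isGalois (Qz K m) (Qz K n)
  rw [Qz_sup_Qz, finrank_Qz, finrank_Qz, finrank_Qz, ← Nat.totient_lcm_mul_totient_gcd] at key
  refine (eq_of_le_of_finrank_le hle ?_).symm
  rw [finrank_Qz, Nat.eq_of_mul_eq_mul_left (Nat.totient_pos.2 (NeZero.pos _)) key]

theorem exists_le_Qz_of_le_Qcyc {E : IntermediateField ℚ (AlgebraicClosure K)}
    [FiniteDimensional ℚ E] (h : E ≤ Qcyc K) : ∃ n, 0 < n ∧ E ≤ Qz K n := by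
  have hE : IsCompactElement E := by
    obtain ⟨t, ht, rfl⟩ := fg_def.1 <|
      E.fg_of_fg_toSubalgebra (Subalgebra.fg_of_fg_toSubmodule (Module.Finite.iff_fg.1 ‹_›))
    exact adjoin_finite_isCompactElement ht
  set s := Qz K '' {n | 0 < n}
  have hdir : DirectedOn (· ≤ ·) s := by
    rintro _ ⟨a, ha, rfl⟩ _ ⟨b, hb, rfl⟩
    exact ⟨Qz K (a * b), ⟨a * b, Nat.mul_pos ha hb, rfl⟩,
      Qz_mono K (dvd_mul_right a b), Qz_mono K (dvd_mul_left b a)⟩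
  have hcyc : Qcyc K ≤ sSup s := by
    refine adjoin_le_iff.2 ?_
    rintro x ⟨n, hn, hx⟩
    exact le_sSup (Set.mem_image_of_mem (Qz K) hn) (subset_adjoin ℚ _ hx)
  obtain ⟨_, ⟨n, hn, rfl⟩, hEn⟩ :=
    (CompleteLattice.isCompactElement_iff_le_of_directed_sSup_le _ E).1 hE s
      ⟨_, 1, Nat.one_pos, rfl⟩ hdir (h.trans hcyc)
  exact ⟨n, hn, hEn⟩

noncomputable def algEquivKF : K ≃ₐ[ℚ] KF K :=
  ((botEquiv K (AlgebraicClosure K)).restrictScalars ℚ).symm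

instance : FiniteDimensional ℚ (KF K) :=
  Module.Finite.equiv (algEquivKF K).toLinearEquiv

theorem finrank_KF : finrank ℚ (KF K) = finrank ℚ K :=
  (algEquivKF K).toLinearEquiv.finrank_eq.symm

theorem mK_pos_and_KF_inf_Qcyc_le : 0 < mK K ∧ KF K ⊓ Qcyc K ≤ Qz K (mK K) :=
  Nat.sInf_mem (exists_le_Qz_of_le_Qcyc K inf_le_right)

theorem finrank_KF_sup_Qz (n : ℕ) :
    finrank ℚ ↥(KF K ⊔ Qz K n) = finrank ℚ K * phiK K n := by
  set S := {x : AlgebraicClosure K | x ^ n = 1}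
  have h₁ : (adjoin K S).restrictScalars ℚ = (adjoin (KF K) S).restrictScalars ℚ :=
    restrictScalars_adjoin_of_algEquiv (algEquivKF K) rfl S
  have h₂ : (adjoin (KF K) S).restrictScalars ℚ = KF K ⊔ Qz K n :=
    restrictScalars_adjoin_eq_sup (F := ℚ) (KF K) S
  rw [← h₂, ← h₁, phiK]
  exact (Module.finrank_mul_finrank ℚ K (adjoin K S)).symm

theorem phiK_mul_finrank_KF_inf_Qz (n : ℕ) [NeZero n] :
    phiK K n * finrank ℚ ↥(KF K ⊓ Qz K n) = n.totient := by
  have key := finrank_sup_mul_finrank_inf_of_isGalois (KF K) (Qz K n)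
  rw [finrank_KF_sup_Qz, finrank_Qz, finrank_KF, mul_assoc] at key
  exact Nat.eq_of_mul_eq_mul_left finrank_pos key

theorem KF_inf_Qz_pow_factorization_add {ℓ : ℕ} (hℓ : ℓ.Prime) (k : ℕ) :
    KF K ⊓ Qz K (ℓ ^ ((mK K).factorization ℓ + k)) =
      KF K ⊓ Qz K (ℓ ^ (mK K).factorization ℓ) := by
  obtain ⟨hm, hmK⟩ := mK_pos_and_KF_inf_Qcyc_le K
  have : NeZero (mK K) := ⟨hm.ne'⟩
  have : NeZero ℓ := ⟨hℓ.ne_zero⟩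
  refine le_antisymm (le_inf inf_le_left ?_)
    (inf_le_inf_left _ (Qz_mono K (pow_dvd_pow ℓ (Nat.le_add_right _ k))))
  rw [← Nat.gcd_pow_factorization_add hℓ hm.ne' k, ← Qz_inf_Qz]
  exact le_inf ((inf_le_inf_left _ (Qz_le_Qcyc K (pow_pos hℓ.pos _))).trans hmK) inf_le_right

end Cyclotomic

/-- For a prime `ℓ ∣ m_K` with `b_ℓ = ord_ℓ(m_K)`:
`φ_K(ℓ^{b_ℓ+k}) = ℓ^k · φ_K(ℓ^{b_ℓ})` for all `k ≥ 0`. -/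
theorem stmt_5 (K : Type) [Field K] [NumberField K] (ℓ : ℕ) (hℓ : ℓ.Prime) (hd : ℓ ∣ mK K) :
    ∀ k : ℕ, phiK K (ℓ ^ ((mK K).factorization ℓ + k)) =
      ℓ ^ k * phiK K (ℓ ^ ((mK K).factorization ℓ)) := by
  intro k
  set b := (mK K).factorization ℓ
  have hb : 0 < b := hℓ.factorization_pos_of_dvd (mK_pos_and_KF_inf_Qcyc_le K).1.ne' hd
  have : NeZero ℓ := ⟨hℓ.ne_zero⟩
  have h₀ := phiK_mul_finrank_KF_inf_Qz K (ℓ ^ b)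
  have h₁ := phiK_mul_finrank_KF_inf_Qz K (ℓ ^ (b + k))
  rw [KF_inf_Qz_pow_factorization_add K hℓ k, Nat.totient_prime_pow_add hℓ hb, ← h₀,
    ← mul_assoc] at h₁
  exact Nat.eq_of_mul_eq_mul_right finrank_pos h₁
end

section
/- The Dirichlet series D(s) = Σ_{n≥1} 1/(φ(n) n^{s−1}) factors as D(s) = ζ(s)·ζ(s+1)·h(s), where h(s) = ∏_ℓ (1 + ℓ^{−(s+2)} (1 − ℓ^{−s}) (1 − 1/ℓ)^{−1}), the product running over all primes ℓ, valid for Re(s) > 1. -/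
open Filter Asymptotics

/-- The Euler product `h(s) = ∏_ℓ (1 + ℓ^{-(s+2)}(1 - ℓ^{-s})(1 - 1/ℓ)⁻¹)` over primes. -/
noncomputable def hfun (s : ℂ) : ℂ :=
  ∏' p : Nat.Primes, (1 + (p : ℂ) ^ (-(s + 2)) * (1 - (p : ℂ) ^ (-s)) * (1 - 1 / (p : ℂ))⁻¹)

/-!
The coefficient `n / φ(n)` of `D(s) = ∑ (n/φ(n)) n^{-s}` is multiplicative and equals `1 ∗ μ²/φ`;
as `μ²/φ` is bounded, `D` converges absolutely for `Re s > 1` and has an Euler product. At a prime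
`p`, with `x = p^{-s}`, the local factor is `1 + (p/(p-1)) x/(1-x)`, and multiplying it by the
inverse local factors `(1 - x)(1 - x/p)` of `ζ(s)ζ(s+1)` leaves `1 + x(1-x)/(p(p-1))`, the factor
of `h(s)`.
-/

lemma norm_prime_cpow_neg_lt_one {p : ℕ} (hp : p.Prime) {s : ℂ} (hs : 0 < s.re) :
    ‖(p : ℂ) ^ (-s)‖ < 1 := by
  rw [Complex.norm_natCast_cpow_of_pos hp.pos]
  exact Real.rpow_lt_one_of_one_lt_of_neg (by exact_mod_cast hp.one_lt) (by simpa using hs)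

open ArithmeticFunction LSeries
open scoped ArithmeticFunction.zeta

namespace ArithmeticFunction

noncomputable def sqfreeInvTotient : ArithmeticFunction ℂ :=
  ⟨fun n => if Squarefree n then (n.totient : ℂ)⁻¹ else 0, by simp [not_squarefree_zero]⟩

noncomputable def idDivTotient : ArithmeticFunction ℂ :=
  ⟨fun n => (n : ℂ) / n.totient, by simp⟩

lemma isMultiplicative_sqfreeInvTotient : sqfreeInvTotient.IsMultiplicative := by
  refine IsMultiplicative.iff_ne_zero.mpr ⟨by simp [sqfreeInvTotient], fun {m n} _ _ h => ?_⟩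
  by_cases hsm : Squarefree m <;> by_cases hsn : Squarefree n <;>
    simp [sqfreeInvTotient, Nat.squarefree_mul h, hsm, hsn, Nat.totient_mul h, mul_comm]

lemma isMultiplicative_idDivTotient : idDivTotient.IsMultiplicative := by
  refine IsMultiplicative.iff_ne_zero.mpr ⟨by simp [idDivTotient], fun {m n} _ _ h => ?_⟩
  simp only [idDivTotient, coe_mk, Nat.totient_mul h, Nat.cast_mul, mul_div_mul_comm]

lemma norm_sqfreeInvTotient_le_one (n : ℕ) : ‖sqfreeInvTotient n‖ ≤ 1 := by
  simp only [sqfreeInvTotient, coe_mk]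
  split_ifs
  · simpa using Nat.cast_inv_le_one (α := ℝ) n.totient
  · simp

lemma idDivTotient_prime_pow_succ {p : ℕ} (hp : p.Prime) (k : ℕ) :
    idDivTotient (p ^ (k + 1)) = p / (p - 1) := by
  have hp0 : (p : ℂ) ≠ 0 := Nat.cast_ne_zero.mpr hp.ne_zero
  have hp1 : (p : ℂ) - 1 ≠ 0 := sub_ne_zero.mpr (Nat.cast_ne_one.mpr hp.ne_one)
  simp only [idDivTotient, coe_mk, Nat.totient_prime_pow_succ hp, Nat.cast_mul, Nat.cast_pow,
    Nat.cast_sub hp.one_le, Nat.cast_one]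
  field_simp
  ring

lemma coe_zeta_mul_sqfreeInvTotient :
    (ζ : ArithmeticFunction ℂ) * sqfreeInvTotient = idDivTotient := by
  refine (IsMultiplicative.eq_iff_eq_on_prime_powers _
    (isMultiplicative_zeta.natCast.mul isMultiplicative_sqfreeInvTotient) _
    isMultiplicative_idDivTotient).mpr fun p k hp => ?_
  rw [coe_zeta_mul_apply, Nat.sum_divisors_prime_pow hp]
  rcases k with _ | k
  · simp [sqfreeInvTotient, idDivTotient]
  have hp1 : (p : ℂ) - 1 ≠ 0 := sub_ne_zero.mpr (Nat.cast_ne_one.mpr hp.ne_one)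
  have h_not_sqfree (i : ℕ) : ¬ Squarefree (p ^ (i + 2)) := fun h =>
    hp.ne_one (Nat.isUnit_iff.mp (h p ⟨p ^ i, by ring⟩))
  rw [Finset.sum_range_succ', Finset.sum_range_succ', idDivTotient_prime_pow_succ hp]
  simp only [sqfreeInvTotient, coe_mk, h_not_sqfree, ↓reduceIte, Finset.sum_const_zero, zero_add,
    pow_zero, pow_one, isUnit_iff_eq_one, IsUnit.squarefree, hp.squarefree, Nat.totient_one,
    Nat.totient_prime hp, Nat.cast_sub hp.one_le, Nat.cast_one, inv_one]
  field_simp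
  ring

lemma LSeriesSummable_idDivTotient {s : ℂ} (hs : 1 < s.re) : LSeriesSummable idDivTotient s :=
  coe_zeta_mul_sqfreeInvTotient ▸ LSeriesSummable_mul (LSeriesSummable_zeta_iff.mpr hs)
    (LSeriesSummable_of_bounded_of_one_lt_re (fun n _ => norm_sqfreeInvTotient_le_one n) hs)

lemma IsMultiplicative.LSeries_eulerProduct_hasProd {f : ArithmeticFunction ℂ}
    (hf : f.IsMultiplicative) {s : ℂ} (hsum : LSeriesSummable f s) :
    HasProd (fun p : Nat.Primes => ∑' e, term f s (p ^ e)) (LSeries f s) := by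
  refine EulerProduct.eulerProduct_hasProd (by simp [hf.map_one]) (fun {m n} h => ?_)
    (summable_norm_iff.mpr hsum) (term_zero f s)
  rcases eq_or_ne m 0 with rfl | hm
  · simp [(Nat.coprime_zero_left n).mp h, hf.map_one]
  rcases eq_or_ne n 0 with rfl | hn
  · simp [(Nat.coprime_zero_right m).mp h, hf.map_one]
  rw [term_of_ne_zero (mul_ne_zero hm hn), term_of_ne_zero hm, term_of_ne_zero hn,
    hf.map_mul_of_coprime h, Nat.cast_mul, Complex.natCast_mul_natCast_cpow, mul_div_mul_comm]

lemma term_idDivTotient (s : ℂ) (n : ℕ) :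
    term idDivTotient s n = if n = 0 then 0 else 1 / ((n.totient : ℂ) * (n : ℂ) ^ (s - 1)) := by
  rcases eq_or_ne n 0 with rfl | hn
  · simp
  have hn0 : (n : ℂ) ≠ 0 := Nat.cast_ne_zero.mpr hn
  rw [term_of_ne_zero hn, if_neg hn, Complex.cpow_sub _ _ hn0, Complex.cpow_one]
  simp only [idDivTotient, coe_mk]
  field_simp

lemma hasSum_term_idDivTotient_prime_pow {p : ℕ} (hp : p.Prime) {s : ℂ} (hs : 0 < s.re) :
    HasSum (fun e => term idDivTotient s (p ^ e))
      (1 + p / (p - 1) * (p : ℂ) ^ (-s) * (1 - (p : ℂ) ^ (-s))⁻¹) := by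
  have h_succ (e : ℕ) : term idDivTotient s (p ^ (e + 1)) =
      p / (p - 1) * (p : ℂ) ^ (-s) * ((p : ℂ) ^ (-s)) ^ e := by
    rw [term_of_ne_zero (pow_ne_zero _ hp.ne_zero), idDivTotient_prime_pow_succ hp, Nat.cast_pow,
      ← Complex.natCast_cpow_natCast_mul, Complex.cpow_nat_mul, Complex.cpow_neg, inv_pow, pow_succ]
    ring
  have h_tail : HasSum (fun e => term idDivTotient s (p ^ (e + 1)))
      (p / (p - 1) * (p : ℂ) ^ (-s) * (1 - (p : ℂ) ^ (-s))⁻¹) := by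
    simpa only [h_succ] using (hasSum_geometric_of_norm_lt_one
      (norm_prime_cpow_neg_lt_one hp hs)).mul_left (p / (p - 1) * (p : ℂ) ^ (-s))
  have h_zero : term idDivTotient s (p ^ 0) = 1 := by
    rw [pow_zero, term_of_ne_zero one_ne_zero, isMultiplicative_idDivTotient.map_one,
      Nat.cast_one, Complex.one_cpow, div_one]
  simpa only [h_zero] using HasSum.zero_add (f := fun e => term idDivTotient s (p ^ e)) h_tail

end ArithmeticFunction

lemma euler_factor_mul_eq {K : Type*} [Field K] {p x : K} (hp : p ≠ 0) (hp1 : p ≠ 1)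
    (hx : x ≠ 1) :
    (1 + p / (p - 1) * x * (1 - x)⁻¹) * (1 - x) * (1 - x * p⁻¹) =
      1 + x * p⁻¹ ^ 2 * (1 - x) * (1 - 1 / p)⁻¹ := by
  have hp1' : p - 1 ≠ 0 := sub_ne_zero.mpr hp1
  have hx' : 1 - x ≠ 0 := sub_ne_zero.mpr hx.symm
  have hp' : 1 - 1 / p ≠ 0 := by rwa [one_sub_div hp, div_ne_zero_iff, and_iff_left hp]
  field_simp
  ring

lemma euler_factor_idDivTotient_mul_eq {p : ℕ} (hp : p.Prime) {s : ℂ} (hs : 0 < s.re) :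
    (1 + p / (p - 1) * (p : ℂ) ^ (-s) * (1 - (p : ℂ) ^ (-s))⁻¹) * (1 - (p : ℂ) ^ (-s)) *
      (1 - (p : ℂ) ^ (-(s + 1))) =
      1 + (p : ℂ) ^ (-(s + 2)) * (1 - (p : ℂ) ^ (-s)) * (1 - 1 / (p : ℂ))⁻¹ := by
  have hp0 : (p : ℂ) ≠ 0 := Nat.cast_ne_zero.mpr hp.ne_zero
  have hx : (p : ℂ) ^ (-s) ≠ 1 := fun h => by
    simpa [h] using norm_prime_cpow_neg_lt_one hp hs
  rw [neg_add, Complex.cpow_add _ _ hp0, Complex.cpow_neg_one, neg_add, Complex.cpow_add _ _ hp0,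
    Complex.cpow_neg _ 2, Complex.cpow_ofNat, ← inv_pow]
  exact euler_factor_mul_eq hp0 (Nat.cast_ne_one.mpr hp.ne_one) hx

/-- For `Re(s) > 1`, `D(s) = Σ_{n≥1} 1/(φ(n) n^{s-1})` converges and factors as
`ζ(s)·ζ(s+1)·h(s)`. -/
theorem stmt_9 (s : ℂ) (hs : 1 < s.re) :
    Summable (fun n : ℕ => if n = 0 then 0 else 1 / ((Nat.totient n : ℂ) * (n : ℂ) ^ (s - 1))) ∧
    ∑' n : ℕ, (if n = 0 then 0 else 1 / ((Nat.totient n : ℂ) * (n : ℂ) ^ (s - 1))) =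
      riemannZeta s * riemannZeta (s + 1) * hfun s := by
  have hs1 : 1 < (s + 1).re := by simp only [Complex.add_re, Complex.one_re]; linarith
  have hζ := riemannZeta_ne_zero_of_one_lt_re hs
  have hζ1 := riemannZeta_ne_zero_of_one_lt_re hs1
  have h_prod : HasProd
      (fun p : Nat.Primes => 1 + (p : ℂ) ^ (-(s + 2)) * (1 - (p : ℂ) ^ (-s)) * (1 - 1 / (p : ℂ))⁻¹)
      (LSeries idDivTotient s * (riemannZeta s)⁻¹ * (riemannZeta (s + 1))⁻¹) := by
    convert ((isMultiplicative_idDivTotient.LSeries_eulerProduct_hasProd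
      (LSeriesSummable_idDivTotient hs)).mul ((riemannZeta_eulerProduct_hasProd hs).inv₀ hζ)).mul
      ((riemannZeta_eulerProduct_hasProd hs1).inv₀ hζ1) using 2 with p
    rw [inv_inv, inv_inv, (hasSum_term_idDivTotient_prime_pow p.prop (by linarith)).tsum_eq,
      euler_factor_idDivTotient_mul_eq p.prop (by linarith)]
  simp_rw [← term_idDivTotient]
  refine ⟨LSeriesSummable_idDivTotient hs, ?_⟩
  rw [← LSeries, hfun, h_prod.tprod_eq]
  field_simp
end
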